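/- The finite height property is transitive: if K ≤ H ≤ G, K has height at most m in H, and H has height at most n in G, then K has finite height in G (bounded by a function of m and n), provided every finite-intersection condition is interpreted via essential distinctness of cosets. -/

import Mathlib

open Pointwise

/-! Given `m * n` elements of `G` in pairwise distinct cosets of `K`, pigeonhole on their
`H`-cosets yields either `n` of them in pairwise distinct cosets of `H`, whose conjugates of
`H` (hence of `K ≤ H`) meet in a finite set, or `m` of them in one coset `a H`. In the latter
case, translating by `a⁻¹` moves them into `H` while keeping their `K`-cosets distinct, and
only conjugates the intersection by `a⁻¹`, so the height of `K` in `H` applies. -/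

theorem Function.exists_injective_comp_or_embedding_fiber {ι α : Type*} [Fintype ι]
    [Nonempty α] (g : ι → α) {m n : ℕ} (hcard : m * n ≤ Fintype.card ι) :
    (∃ e : Fin n → ι, Function.Injective (g ∘ e)) ∨ ∃ y, ∃ e : Fin m ↪ ι, ∀ i, g (e i) = y := by
  classical
  rcases Nat.eq_zero_or_pos m with rfl | hm
  · exact .inr ⟨Classical.arbitrary α, Function.Embedding.ofIsEmpty, fun i => i.elim0⟩
  by_cases hrange : n ≤ Fintype.card (Set.range g)
  · obtain ⟨e⟩ := Function.Embedding.nonempty_of_card_le (α := Fin n) (β := Set.range g)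
      (by rwa [Fintype.card_fin])
    refine .inl ⟨Set.rangeSplitting g ∘ e, ?_⟩
    have hge : g ∘ Set.rangeSplitting g ∘ e = (↑) ∘ e := by
      ext i; exact Set.apply_rangeSplitting g (e i)
    rw [hge]
    exact Subtype.val_injective.comp e.injective
  · push Not at hrange
    have : Nonempty (Set.range g) := by
      have : 0 < Fintype.card ι := by nlinarith
      obtain ⟨i⟩ := Fintype.card_pos_iff.mp this
      exact ⟨⟨g i, i, rfl⟩⟩
    obtain ⟨y, hy⟩ := Fintype.exists_le_card_fiber_of_mul_le_card (Set.rangeFactorization g)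
      (n := m) (by nlinarith)
    obtain ⟨e⟩ := Function.Embedding.nonempty_of_card_le (α := Fin m)
      (β := {i // Set.rangeFactorization g i = y}) (by simpa [Fintype.card_subtype] using hy)
    refine .inr ⟨y, e.trans (Function.Embedding.subtype _), fun i => ?_⟩
    exact congrArg Subtype.val (e i).2

section Conjugates

variable {G : Type*} [Group G]

theorem iInter_conj_image_subset {ι κ : Type*} {s t : Set G} (hst : s ⊆ t) (f : ι → G)
    (e : κ → ι) :
    ⋂ i, (fun x => f i * x * (f i)⁻¹) '' s ⊆ ⋂ k, (fun x => f (e k) * x * (f (e k))⁻¹) '' t :=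
  Set.iInter_mono' fun k => ⟨e k, Set.image_mono hst⟩

theorem finite_iInter_conj_image_mul_left_iff {ι : Type*} (a : G) (f : ι → G) (s : Set G) :
    (⋂ i, (fun x => a * f i * x * (a * f i)⁻¹) '' s).Finite ↔
      (⋂ i, (fun x => f i * x * (f i)⁻¹) '' s).Finite := by
  have hbij : Function.Bijective fun x => a * x * a⁻¹ := (MulAut.conj a).bijective
  have hconj : ⋂ i, (fun x => a * f i * x * (a * f i)⁻¹) '' s =
      (fun x => a * x * a⁻¹) '' ⋂ i, (fun x => f i * x * (f i)⁻¹) '' s := by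
    rw [Set.image_iInter hbij]
    simp only [Set.image_image, mul_inv_rev, mul_assoc]
  rw [hconj, Set.finite_image_iff hbij.injective.injOn]

end Conjugates

/-- Transitivity of finite height: if `K ≤ H ≤ G`, `K` has height at most `m` in `H`
(intersections of `m` conjugates of `K` by elements of `H` representing `m` pairwise
distinct cosets of `K` are finite) and `H` has height at most `n` in `G`, then `K`
has finite height in `G`, with a bound depending only on `m` and `n`. -/
theorem stmt4 :
    ∀ m n : ℕ, ∃ N : ℕ, ∀ (G : Type) [Group G] (K H : Subgroup G), K ≤ H →
      (∀ f : Fin m → G, (∀ i, f i ∈ H) →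
        (∀ i j : Fin m, i ≠ j → f i • (K : Set G) ≠ f j • (K : Set G)) →
        (⋂ i, (fun x => f i * x * (f i)⁻¹) '' (K : Set G)).Finite) →
      (∀ f : Fin n → G,
        (∀ i j : Fin n, i ≠ j → f i • (H : Set G) ≠ f j • (H : Set G)) →
        (⋂ i, (fun x => f i * x * (f i)⁻¹) '' (H : Set G)).Finite) →
      ∀ f : Fin N → G,
        (∀ i j : Fin N, i ≠ j → f i • (K : Set G) ≠ f j • (K : Set G)) →
        (⋂ i, (fun x => f i * x * (f i)⁻¹) '' (K : Set G)).Finite := by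
  intro m n
  refine ⟨m * n, fun G _ K H hKH hK hH f hf => ?_⟩
  rcases Function.exists_injective_comp_or_embedding_fiber (fun i => (f i : G ⧸ H)) (m := m)
    (n := n) (by simp) with ⟨e, he⟩ | ⟨y, e, hy⟩
  · refine (hH (f ∘ e) fun i j hij => ?_).subset (iInter_conj_image_subset hKH f e)
    rw [Ne, leftCoset_eq_iff, ← QuotientGroup.eq]
    exact he.ne hij
  · obtain ⟨a, rfl⟩ := QuotientGroup.mk_surjective y
    have hmem : ∀ i, a⁻¹ * f (e i) ∈ H := fun i => QuotientGroup.eq.mp (hy i).symm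
    have hdistinct : ∀ i j, i ≠ j → (a⁻¹ * f (e i)) • (K : Set G) ≠ (a⁻¹ * f (e j)) • K := by
      intro i j hij
      rw [Ne, mul_smul, mul_smul, smul_left_cancel_iff]
      exact hf _ _ (e.injective.ne hij)
    exact ((finite_iInter_conj_image_mul_left_iff a⁻¹ (f ∘ e) K).mp (hK _ hmem hdistinct)).subset
      (iInter_conj_image_subset subset_rfl f e)
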